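/- arXiv:1809.10477 — 7 statements merged into one kernel-verified Lean document; each statement's English description precedes it below -/
import Mathlib

section
/- Let E be a real Hilbert space, let φ : E → ℝ be differentiable with β-Lipschitz gradient (β > 0), and let h : E → ℝ be convex. Set f = φ + h. Fix X, X̃, V ∈ E, a step size η ∈ (0,1], an arbitrary vector w ∈ E (a gradient estimate), and δ ≥ 0. Define ψ(U) := ‖U − X + (1/(2βη))·w‖² + (1/(βη))·h(U). If ψ(V) ≤ ψ(X̃) + δ and X⁺ := (1−η)X + ηV, then f(X⁺) ≤ (1−η)f(X) + η(φ(X) + h(X̃)) + (1/(2β))‖∇φ(X) − w‖² + η⟨X̃ − X, w⟩ + βη²‖X̃ − X‖² + βη²δ. -/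
/-!
The descent lemma for the `β`-smooth part, with the inexact direction `w` in place of `∇φ X` and
the error `⟪∇φ X - w, Xp - X⟫` absorbed by Young's inequality, bounds `φ Xp`; convexity of `h`
bounds `h Xp` along the segment from `X` to `V`. Multiplying the approximate optimality
`ψ V ≤ ψ Xt + δ` by `βη` and expanding the square (the `‖w‖²` terms cancel) compares
`βη‖U - X‖² + ⟪U - X, w⟫ + h U` at `U = V` and `U = Xt`; scaled by `η`, this is exactly what is
left over from the first two bounds.
-/

open Set
open scoped RealInnerProductSpace

section InnerProduct

variable {E : Type*} [NormedAddCommGroup E] [InnerProductSpace ℝ E]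

theorem two_mul_real_inner_le_norm_sq_add_norm_sq (a b : E) :
    2 * ⟪a, b⟫ ≤ ‖a‖ ^ 2 + ‖b‖ ^ 2 := by
  linarith [real_inner_le_norm a b, two_mul_le_add_sq ‖a‖ ‖b‖]

theorem real_inner_le_young {c : ℝ} (hc : 0 < c) (a b : E) :
    ⟪a, b⟫ ≤ 1 / (2 * c) * ‖a‖ ^ 2 + c / 2 * ‖b‖ ^ 2 := by
  have h := two_mul_real_inner_le_norm_sq_add_norm_sq a (c • b)
  rw [real_inner_smul_right, norm_smul, Real.norm_of_nonneg hc.le, mul_pow] at h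
  have hrhs : 1 / (2 * c) * ‖a‖ ^ 2 + c / 2 * ‖b‖ ^ 2
      = (‖a‖ ^ 2 + c ^ 2 * ‖b‖ ^ 2) / (2 * c) := by
    field_simp
  rw [hrhs, le_div_iff₀ (by positivity)]
  linarith

theorem mul_norm_add_smul_sq {t : ℝ} (ht : t ≠ 0) (u w : E) :
    t * ‖u + (1 / (2 * t)) • w‖ ^ 2 = t * ‖u‖ ^ 2 + ⟪u, w⟫ + ‖w‖ ^ 2 / (4 * t) := by
  rw [norm_add_sq_real, real_inner_smul_right, norm_smul, Real.norm_eq_abs, mul_pow, sq_abs]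
  field_simp
  ring

section Smooth

variable [CompleteSpace E] {φ : E → ℝ}

theorem HasGradientAt.hasDerivAt_comp_add_smul {g x d : E} {t : ℝ}
    (hφ : HasGradientAt φ g (x + t • d)) :
    HasDerivAt (fun s : ℝ => φ (x + s • d)) ⟪g, d⟫ t := by
  have hline : HasDerivAt (fun s : ℝ => x + s • d) d t := by
    simpa using ((hasDerivAt_id t).smul_const d).const_add x
  simpa [Function.comp_def] using hφ.hasFDerivAt.comp_hasDerivAt t hline

variable {β : ℝ} (hφ : Differentiable ℝ φ)
  (hlip : ∀ x y : E, ‖gradient φ x - gradient φ y‖ ≤ β * ‖x - y‖)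
include hφ hlip

theorem le_add_inner_gradient_add_sq_of_lipschitz_gradient (x y : E) :
    φ y ≤ φ x + ⟪gradient φ x, y - x⟫ + β / 2 * ‖y - x‖ ^ 2 := by
  set d := y - x
  set g : ℝ → ℝ := fun t => φ (x + t • d) - t * ⟪gradient φ x, d⟫ - β / 2 * t ^ 2 * ‖d‖ ^ 2
  have hg : ∀ t, HasDerivAt g
      (⟪gradient φ (x + t • d), d⟫ - ⟪gradient φ x, d⟫ - β * t * ‖d‖ ^ 2) t := by
    intro t
    have hline := (hφ (x + t • d)).hasGradientAt.hasDerivAt_comp_add_smul (x := x)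
    have hlin := (hasDerivAt_id t).mul_const ⟪gradient φ x, d⟫
    have hquad := ((hasDerivAt_pow 2 t).const_mul (β / 2)).mul_const (‖d‖ ^ 2)
    refine ((hline.sub hlin).sub hquad).congr_deriv ?_
    simp only [one_mul, Nat.cast_ofNat, Nat.add_one_sub_one, pow_one]
    ring
  have hg_nonpos : ∀ t ∈ interior (Ici (0 : ℝ)),
      ⟪gradient φ (x + t • d), d⟫ - ⟪gradient φ x, d⟫ - β * t * ‖d‖ ^ 2 ≤ 0 := by
    intro t ht
    rw [interior_Ici, mem_Ioi] at ht
    rw [sub_nonpos, ← inner_sub_left]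
    calc ⟪gradient φ (x + t • d) - gradient φ x, d⟫
        ≤ ‖gradient φ (x + t • d) - gradient φ x‖ * ‖d‖ := real_inner_le_norm _ _
      _ ≤ β * ‖(x + t • d) - x‖ * ‖d‖ := by gcongr; exact hlip _ _
      _ = β * t * ‖d‖ ^ 2 := by
        rw [add_sub_cancel_left, norm_smul, Real.norm_of_nonneg ht.le]; ring
  have hanti := antitoneOn_of_hasDerivWithinAt_nonpos (convex_Ici 0)
    (fun t _ => (hg t).continuousAt.continuousWithinAt) (fun t _ => (hg t).hasDerivWithinAt)
    hg_nonpos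
  have h01 := hanti self_mem_Ici (mem_Ici.mpr zero_le_one) zero_le_one
  have hxd : x + d = y := add_sub_cancel x y
  simp only [g, one_smul, zero_smul, add_zero, one_pow, zero_mul, sub_zero, mul_one, hxd,
    ne_eq, OfNat.ofNat_ne_zero, not_false_eq_true, zero_pow, mul_zero] at h01
  linarith

theorem le_add_inner_add_norm_sub_gradient_sq (hβ : 0 < β) (x y w : E) :
    φ y ≤ φ x + ⟪y - x, w⟫ + 1 / (2 * β) * ‖gradient φ x - w‖ ^ 2 + β * ‖y - x‖ ^ 2 := by
  have hdesc := le_add_inner_gradient_add_sq_of_lipschitz_gradient hφ hlip x y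
  have hyoung := real_inner_le_young hβ (gradient φ x - w) (y - x)
  have hsplit : ⟪gradient φ x, y - x⟫ = ⟪gradient φ x - w, y - x⟫ + ⟪y - x, w⟫ := by
    rw [inner_sub_left, real_inner_comm w]; ring
  linarith

end Smooth

end InnerProduct

theorem stmt_0_general {E : Type*} [NormedAddCommGroup E] [InnerProductSpace ℝ E] [CompleteSpace E]
    (φ h f : E → ℝ) (β : ℝ) (hβ : 0 < β)
    (hφdiff : Differentiable ℝ φ)
    (hφlip : ∀ x y : E, ‖gradient φ x - gradient φ y‖ ≤ β * ‖x - y‖)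
    (hconv : ConvexOn ℝ Set.univ h)
    (hf : ∀ x, f x = φ x + h x)
    (X Xt V w : E) (η δ : ℝ) (hη : η ∈ Set.Ioc (0 : ℝ) 1)
    (ψ : E → ℝ)
    (hψ : ∀ U, ψ U = ‖U - X + (1 / (2 * β * η)) • w‖ ^ 2 + (1 / (β * η)) * h U)
    (hV : ψ V ≤ ψ Xt + δ)
    (Xp : E) (hXp : Xp = (1 - η) • X + η • V) :
    f Xp ≤ (1 - η) * f X + η * (φ X + h Xt) + (1 / (2 * β)) * ‖gradient φ X - w‖ ^ 2
      + η * (inner ℝ (Xt - X) w : ℝ) + β * η ^ 2 * ‖Xt - X‖ ^ 2 + β * η ^ 2 * δ := by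
  obtain ⟨hη0, hη1⟩ := hη
  have hβη : 0 < β * η := by positivity
  have hφstep := le_add_inner_add_norm_sub_gradient_sq hφdiff hφlip hβ X Xp w
  have hstep : Xp - X = η • (V - X) := by rw [hXp]; module
  rw [hstep, real_inner_smul_left, norm_smul, Real.norm_of_nonneg hη0.le] at hφstep
  have hhstep : h Xp ≤ (1 - η) * h X + η * h V := by
    simpa [hXp] using hconv.2 (mem_univ X) (mem_univ V) (by linarith) hη0.le (by ring)
  have hmodel : β * η * ‖V - X‖ ^ 2 + ⟪V - X, w⟫ + h V
      ≤ β * η * ‖Xt - X‖ ^ 2 + ⟪Xt - X, w⟫ + h Xt + β * η * δ := by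
    have hscaled := mul_le_mul_of_nonneg_left hV hβη.le
    simp only [hψ, mul_add, mul_assoc 2 β η, mul_norm_add_smul_sq hβη.ne'] at hscaled
    simp only [one_div, mul_inv_cancel_left₀ hβη.ne'] at hscaled
    linarith
  rw [hf, hf]
  linarith [mul_le_mul_of_nonneg_left hmodel hη0.le]

/-- Deterministic core inequality of Lemma 3.1. -/
theorem stmt_0 {E : Type*} [NormedAddCommGroup E] [InnerProductSpace ℝ E] [CompleteSpace E]
    (φ h f : E → ℝ) (β : ℝ) (hβ : 0 < β)
    (hφdiff : Differentiable ℝ φ)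
    (hφlip : ∀ x y : E, ‖gradient φ x - gradient φ y‖ ≤ β * ‖x - y‖)
    (hconv : ConvexOn ℝ Set.univ h)
    (hf : ∀ x, f x = φ x + h x)
    (X Xt V w : E) (η δ : ℝ) (hη : η ∈ Set.Ioc (0 : ℝ) 1) (hδ : 0 ≤ δ)
    (ψ : E → ℝ)
    (hψ : ∀ U, ψ U = ‖U - X + (1 / (2 * β * η)) • w‖ ^ 2 + (1 / (β * η)) * h U)
    (hV : ψ V ≤ ψ Xt + δ)
    (Xp : E) (hXp : Xp = (1 - η) • X + η • V) :
    f Xp ≤ (1 - η) * f X + η * (φ X + h Xt) + (1 / (2 * β)) * ‖gradient φ X - w‖ ^ 2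
      + η * (inner ℝ (Xt - X) w : ℝ) + β * η ^ 2 * ‖Xt - X‖ ^ 2 + β * η ^ 2 * δ :=
  stmt_0_general φ h f β hβ hφdiff hφlip hconv hf X Xt V w η δ hη ψ hψ hV Xp hXp
end

section
/- Let E be a real Hilbert space, let φ : E → ℝ be differentiable with β-Lipschitz gradient (β > 0) and α-strongly convex (α > 0), and let h : E → ℝ be convex. Set f = φ + h. Fix X, X̃, V ∈ E, δ ≥ 0, and a step size η ∈ (0,1] with 2βη ≤ α. Define ψ(U) := ‖U − X + (1/(2βη))·∇φ(X)‖² + (1/(βη))·h(U). If ψ(V) ≤ ψ(X̃) + δ and X⁺ := (1−η)X + ηV, then f(X⁺) ≤ (1−η)f(X) + η f(X̃) + βη²δ. -/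
/-!
Since `X⁺` is a convex combination of `X` and `V`, convexity of `h` bounds `h(X⁺)`, and the
descent lemma for the `β`-smooth `φ` bounds `φ(X⁺)` by the quadratic model of `φ` at `X`.
Multiplied by `βη`, the δ-optimality of `V` for `ψ` compares this model at `V` with the model at
`X̃`, which strong convexity bounds by `φ(X̃)`; the condition `2βη ≤ α` makes the leftover
quadratic term nonpositive.
-/

open scoped RealInnerProductSpace Gradient

section FirstOrder

variable {E : Type*} [NormedAddCommGroup E] [NormedSpace ℝ E]

lemma ConvexOn.add_mul_sub_le_of_hasDerivAt {q : ℝ → ℝ} {d x y : ℝ}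
    (hq : ConvexOn ℝ Set.univ q) (hd : HasDerivAt q d x) (hxy : x < y) :
    q x + d * (y - x) ≤ q y := by
  have h := hq.le_slope_of_hasDerivAt (Set.mem_univ x) (Set.mem_univ y) hxy hd
  rw [slope_def_field, le_div_iff₀ (sub_pos.2 hxy)] at h
  linarith

lemma ConvexOn.comp_line {g : E → ℝ} (hg : ConvexOn ℝ Set.univ g) (x v : E) :
    ConvexOn ℝ Set.univ (fun t : ℝ => g (x + t • v)) := by
  refine ⟨convex_univ, fun a _ b _ p q hp hq hpq => ?_⟩
  have h := hg.2 (Set.mem_univ (x + a • v)) (Set.mem_univ (x + b • v)) hp hq hpq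
  have hpt : x + (p • a + q • b) • v = p • (x + a • v) + q • (x + b • v) := by
    obtain rfl : q = 1 - p := by linarith
    module
  simpa only [hpt] using h

lemma HasFDerivAt.hasDerivAt_comp_line {f : E → ℝ} {f' : E →L[ℝ] ℝ} {x v : E} {t : ℝ}
    (hf : HasFDerivAt f f' (x + t • v)) : HasDerivAt (fun s : ℝ => f (x + s • v)) (f' v) t := by
  have hline : HasDerivAt (fun s : ℝ => x + s • v) v t := by
    simpa using ((hasDerivAt_id t).smul_const v).const_add x
  exact hf.comp_hasDerivAt t hline

lemma ConvexOn.add_apply_sub_le_of_hasFDerivAt {g : E → ℝ} {g' : E →L[ℝ] ℝ} {x : E}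
    (hg : ConvexOn ℝ Set.univ g) (hd : HasFDerivAt g g' x) (y : E) : g x + g' (y - x) ≤ g y := by
  have hline : HasDerivAt (fun t : ℝ => g (x + t • (y - x))) (g' (y - x)) 0 :=
    HasFDerivAt.hasDerivAt_comp_line (by simpa using hd)
  simpa using (hg.comp_line x (y - x)).add_mul_sub_le_of_hasDerivAt hline zero_lt_one

end FirstOrder

section InnerProduct

variable {E : Type*} [NormedAddCommGroup E] [InnerProductSpace ℝ E]

lemma mul_norm_add_smul_sq_add_mul {c : ℝ} (hc : c ≠ 0) (u g : E) (a : ℝ) :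
    c * (‖u + (1 / (2 * c)) • g‖ ^ 2 + (1 / c) * a)
      = c * ‖u‖ ^ 2 + ⟪g, u⟫ + a + ‖g‖ ^ 2 / (4 * c) := by
  rw [norm_add_sq_real, real_inner_smul_right, norm_smul, mul_pow, Real.norm_eq_abs, sq_abs,
    real_inner_comm]
  field_simp
  ring

end InnerProduct

section Gradient

variable {E : Type*} [NormedAddCommGroup E] [InnerProductSpace ℝ E] [CompleteSpace E]

lemma ConvexOn.add_inner_sub_add_sq_le {φ : E → ℝ} {α : ℝ} {φ' x : E}
    (hs : ConvexOn ℝ Set.univ (fun x => φ x - (α / 2) * ‖x‖ ^ 2)) (hφ : HasGradientAt φ φ' x)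
    (y : E) : φ x + ⟪φ', y - x⟫ + (α / 2) * ‖y - x‖ ^ 2 ≤ φ y := by
  have hd := hφ.hasFDerivAt.sub ((hasStrictFDerivAt_norm_sq x).hasFDerivAt.const_mul (α / 2))
  have h := hs.add_apply_sub_le_of_hasFDerivAt hd y
  have hy : ‖y‖ ^ 2 = ‖x‖ ^ 2 + 2 * ⟪x, y - x⟫ + ‖y - x‖ ^ 2 := by
    simpa using norm_add_sq_real x (y - x)
  simp only [sub_apply, smul_apply, InnerProductSpace.toDual_apply_apply, coe_innerSL_apply,
    nsmul_eq_mul, Nat.cast_ofNat, smul_eq_mul, hy] at h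
  linarith

lemma le_add_inner_sub_add_sq_of_lipschitz_gradient {φ : E → ℝ} {β : ℝ} (hφ : Differentiable ℝ φ)
    (hlip : ∀ x y : E, ‖∇ φ x - ∇ φ y‖ ≤ β * ‖x - y‖) (x y : E) :
    φ y ≤ φ x + ⟪∇ φ x, y - x⟫ + (β / 2) * ‖y - x‖ ^ 2 := by
  set v := y - x
  let r : ℝ → ℝ := fun t => (β / 2) * ‖v‖ ^ 2 * t ^ 2 - φ (x + t • v)
  let r' : ℝ → ℝ := fun t => β * ‖v‖ ^ 2 * t - ⟪∇ φ (x + t • v), v⟫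
  have hr : ∀ t, HasDerivAt r (r' t) t := fun t => by
    have hφt : HasDerivAt (fun s : ℝ => φ (x + s • v)) ⟪∇ φ (x + t • v), v⟫ t :=
      (hφ (x + t • v)).hasGradientAt.hasFDerivAt.hasDerivAt_comp_line
    have hsq : HasDerivAt (fun s : ℝ => (β / 2) * ‖v‖ ^ 2 * s ^ 2)
        ((β / 2) * ‖v‖ ^ 2 * (2 * t)) t := by
      simpa using (hasDerivAt_pow 2 t).const_mul ((β / 2) * ‖v‖ ^ 2)
    refine (hsq.sub hφt).congr_deriv ?_
    simp only [r']
    ring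
  have hr'_mono : Monotone r' := fun s t hst => by
    have hsub : (x + t • v) - (x + s • v) = (t - s) • v := by module
    have hinc : ⟪∇ φ (x + t • v) - ∇ φ (x + s • v), v⟫ ≤ β * (t - s) * ‖v‖ ^ 2 :=
      calc ⟪∇ φ (x + t • v) - ∇ φ (x + s • v), v⟫
          ≤ ‖∇ φ (x + t • v) - ∇ φ (x + s • v)‖ * ‖v‖ := real_inner_le_norm _ _
        _ ≤ β * ‖(x + t • v) - (x + s • v)‖ * ‖v‖ := by gcongr; exact hlip _ _
        _ = β * (t - s) * ‖v‖ ^ 2 := by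
          rw [hsub, norm_smul, Real.norm_of_nonneg (sub_nonneg.2 hst)]
          ring
    rw [inner_sub_left] at hinc
    simp only [r']
    linarith
  have hr_convex : ConvexOn ℝ Set.univ r := by
    refine Monotone.convexOn_univ_of_deriv (fun t => (hr t).differentiableAt) ?_
    rwa [show deriv r = r' from funext fun t => (hr t).deriv]
  have h := hr_convex.add_mul_sub_le_of_hasDerivAt (hr 0) zero_lt_one
  simp only [r, r', zero_smul, add_zero, one_smul, show x + v = y from add_sub_cancel x y] at h
  linarith

end Gradient

theorem stmt_1_general {E : Type*} [NormedAddCommGroup E] [InnerProductSpace ℝ E] [CompleteSpace E]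
    (φ h f : E → ℝ) (β α : ℝ) (hβ : 0 < β)
    (hφdiff : Differentiable ℝ φ)
    (hφlip : ∀ x y : E, ‖gradient φ x - gradient φ y‖ ≤ β * ‖x - y‖)
    (hφstrong : ConvexOn ℝ Set.univ (fun x => φ x - (α / 2) * ‖x‖ ^ 2))
    (hconv : ConvexOn ℝ Set.univ h)
    (hf : ∀ x, f x = φ x + h x)
    (X Xt V : E) (η δ : ℝ) (hη : η ∈ Set.Ioc (0 : ℝ) 1)
    (hηα : 2 * β * η ≤ α)
    (ψ : E → ℝ)
    (hψ : ∀ U, ψ U = ‖U - X + (1 / (2 * β * η)) • gradient φ X‖ ^ 2 + (1 / (β * η)) * h U)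
    (hV : ψ V ≤ ψ Xt + δ)
    (Xp : E) (hXp : Xp = (1 - η) • X + η • V) :
    f Xp ≤ (1 - η) * f X + η * f Xt + β * η ^ 2 * δ := by
  obtain ⟨hη0, hη1⟩ := hη
  set g := ∇ φ X
  have hβη : 0 < β * η := mul_pos hβ hη0
  have hmodel : β * η * ‖V - X‖ ^ 2 + ⟪g, V - X⟫ + h V
      ≤ β * η * ‖Xt - X‖ ^ 2 + ⟪g, Xt - X⟫ + h Xt + β * η * δ := by
    have hscaled := mul_le_mul_of_nonneg_left hV hβη.le
    rw [mul_add, hψ, hψ] at hscaled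
    simp only [mul_assoc 2 β η, mul_norm_add_smul_sq_add_mul hβη.ne'] at hscaled
    linarith
  have hdescent : φ Xp ≤ φ X + η * ⟪g, V - X⟫ + (β / 2) * η ^ 2 * ‖V - X‖ ^ 2 := by
    have hstep : Xp - X = η • (V - X) := by rw [hXp]; module
    have := le_add_inner_sub_add_sq_of_lipschitz_gradient hφdiff hφlip X Xp
    rwa [hstep, real_inner_smul_right, norm_smul, Real.norm_of_nonneg hη0.le, mul_pow,
      ← mul_assoc] at this
  have hh : h Xp ≤ (1 - η) * h X + η * h V := by
    simpa [hXp] using hconv.2 (Set.mem_univ X) (Set.mem_univ V) (sub_nonneg.2 hη1) hη0.le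
      (by ring)
  have hstrong := hφstrong.add_inner_sub_add_sq_le (hφdiff X).hasGradientAt Xt
  have hV_nonneg : 0 ≤ β * η ^ 2 * ‖V - X‖ ^ 2 := by positivity
  have hXt_nonneg : 0 ≤ η * (α - 2 * β * η) * ‖Xt - X‖ ^ 2 :=
    mul_nonneg (mul_nonneg hη0.le (sub_nonneg.2 hηα)) (sq_nonneg _)
  rw [hf, hf, hf]
  linear_combination hdescent + hh + η * hmodel + η * hstrong + hV_nonneg / 2 + hXt_nonneg / 2

/-- Exact-gradient deterministic case of Lemma 3.1. -/
theorem stmt_1 {E : Type*} [NormedAddCommGroup E] [InnerProductSpace ℝ E] [CompleteSpace E]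
    (φ h f : E → ℝ) (β α : ℝ) (hβ : 0 < β) (hα : 0 < α)
    (hφdiff : Differentiable ℝ φ)
    (hφlip : ∀ x y : E, ‖gradient φ x - gradient φ y‖ ≤ β * ‖x - y‖)
    (hφstrong : ConvexOn ℝ Set.univ (fun x => φ x - (α / 2) * ‖x‖ ^ 2))
    (hconv : ConvexOn ℝ Set.univ h)
    (hf : ∀ x, f x = φ x + h x)
    (X Xt V : E) (η δ : ℝ) (hη : η ∈ Set.Ioc (0 : ℝ) 1) (hδ : 0 ≤ δ)
    (hηα : 2 * β * η ≤ α)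
    (ψ : E → ℝ)
    (hψ : ∀ U, ψ U = ‖U - X + (1 / (2 * β * η)) • gradient φ X‖ ^ 2 + (1 / (β * η)) * h U)
    (hV : ψ V ≤ ψ Xt + δ)
    (Xp : E) (hXp : Xp = (1 - η) • X + η • V) :
    f Xp ≤ (1 - η) * f X + η * f Xt + β * η ^ 2 * δ :=
  stmt_1_general φ h f β α hβ hφdiff hφlip hφstrong hconv hf X Xt V η δ hη hηα ψ hψ hV Xp hXp
end

section
/- Let E be a real Hilbert space, g : E → ℝ differentiable with β_G-Lipschitz gradient (β_G ≥ 0), C ⊆ E a convex set, f : E → ℝ α-strongly convex on C (α > 0), and X* ∈ C a point with f(X*) ≤ f(X) for all X ∈ C. Then for all X, Y ∈ C: ‖∇g(X) − ∇g(Y)‖² ≤ (4β_G²/α)·( (f(X) − f(X*)) + (f(Y) − f(X*)) ). -/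
open Filter Topology

/-- Quadratic growth at the minimizer for a strongly convex function. -/
lemma quad_growth_aux {E : Type*} [NormedAddCommGroup E] [InnerProductSpace ℝ E]
    (f : E → ℝ) (α : ℝ) (hα : 0 < α) (C : Set E)
    (hf : ConvexOn ℝ C (fun x => f x - (α / 2) * ‖x‖ ^ 2))
    (Xstar : E) (hXstarC : Xstar ∈ C) (hXstar : ∀ X ∈ C, f Xstar ≤ f X)
    (X : E) (hX : X ∈ C) : α / 2 * ‖X - Xstar‖ ^ 2 ≤ f X - f Xstar := by
  have hsc : StrongConvexOn C α f := strongConvexOn_iff_convex.2 hf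
  have key : ∀ t ∈ Set.Ioo (0:ℝ) 1,
      α / 2 * ((1 - t) * ‖X - Xstar‖ ^ 2) ≤ f X - f Xstar := by
    intro t ht
    have h1 : (0:ℝ) ≤ t := ht.1.le
    have h2 : (0:ℝ) ≤ 1 - t := by linarith [ht.2]
    have hsum : t + (1 - t) = 1 := by ring
    have := hsc.2 hX hXstarC h1 h2 hsum
    have hmin := hXstar _ (hsc.1 hX hXstarC h1 h2 hsum)
    simp only [smul_eq_mul] at this
    nlinarith [ht.1, ht.2, hmin, this]
  have htend : Tendsto (fun t : ℝ => α / 2 * ((1 - t) * ‖X - Xstar‖ ^ 2))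
      (𝓝[>] (0:ℝ)) (𝓝 (α / 2 * ((1 - 0) * ‖X - Xstar‖ ^ 2))) := by
    apply Tendsto.mono_left _ nhdsWithin_le_nhds
    exact (Continuous.tendsto (by continuity) 0)
  have hle : ∀ᶠ t in 𝓝[>] (0:ℝ),
      α / 2 * ((1 - t) * ‖X - Xstar‖ ^ 2) ≤ f X - f Xstar := by
    filter_upwards [Ioo_mem_nhdsGT_of_mem (by norm_num : (0:ℝ) ∈ Set.Ico (0:ℝ) 1)] with t ht
    exact key t ht
  have := le_of_tendsto htend hle
  simpa using this

/-- Deterministic core of Lemma 3.3: gradient-difference bound via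
smoothness of `g` and quadratic growth of the strongly convex objective `f`. -/
theorem stmt_5 {E : Type*} [NormedAddCommGroup E] [InnerProductSpace ℝ E] [CompleteSpace E]
    (g f : E → ℝ) (βG α : ℝ) (hβG : 0 ≤ βG) (hα : 0 < α)
    (hgdiff : Differentiable ℝ g)
    (hglip : ∀ x y : E, ‖gradient g x - gradient g y‖ ≤ βG * ‖x - y‖)
    (C : Set E) (hC : Convex ℝ C)
    (hfstrong : ConvexOn ℝ C (fun x => f x - (α / 2) * ‖x‖ ^ 2))
    (Xstar : E) (hXstarC : Xstar ∈ C) (hXstar : ∀ X ∈ C, f Xstar ≤ f X) :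
    ∀ X ∈ C, ∀ Y ∈ C,
      ‖gradient g X - gradient g Y‖ ^ 2 ≤
        (4 * βG ^ 2 / α) * ((f X - f Xstar) + (f Y - f Xstar)) := by
  intro X hX Y hY
  have hqX := quad_growth_aux f α hα C hfstrong Xstar hXstarC hXstar X hX
  have hqY := quad_growth_aux f α hα C hfstrong Xstar hXstarC hXstar Y hY
  have hlip := hglip X Y
  have h1 : ‖X - Y‖ ≤ ‖X - Xstar‖ + ‖Y - Xstar‖ := by
    calc ‖X - Y‖ = ‖(X - Xstar) - (Y - Xstar)‖ := by rw [sub_sub_sub_cancel_right]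
    _ ≤ ‖X - Xstar‖ + ‖Y - Xstar‖ := norm_sub_le _ _
  have h2 : ‖X - Y‖ ^ 2 ≤ 2 * (‖X - Xstar‖ ^ 2 + ‖Y - Xstar‖ ^ 2) := by
    nlinarith [norm_nonneg (X - Y), norm_nonneg (X - Xstar), norm_nonneg (Y - Xstar),
      sq_nonneg (‖X - Xstar‖ - ‖Y - Xstar‖)]
  have h3 : ‖gradient g X - gradient g Y‖ ^ 2 ≤ βG ^ 2 * ‖X - Y‖ ^ 2 := by
    have := mul_self_le_mul_self (norm_nonneg _) hlip
    nlinarith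
  rw [div_mul_eq_mul_div, le_div_iff₀ hα]
  nlinarith [mul_le_mul_of_nonneg_right h3 hα.le,
    mul_le_mul_of_nonneg_left h2 (mul_nonneg (sq_nonneg βG) hα.le),
    mul_le_mul_of_nonneg_left hqX (mul_nonneg (by norm_num : (0:ℝ) ≤ 4) (sq_nonneg βG)),
    mul_le_mul_of_nonneg_left hqY (mul_nonneg (by norm_num : (0:ℝ) ≤ 4) (sq_nonneg βG))]
end

section
/- Let α, β > 0 with α ≤ 2β, let δ ≥ 0, C₀ > 0, and let T be a natural number with T − 1 ≥ (8β/(3α))·ln 8. Let h : ℕ≥1 × {1,…,T} → ℝ be nonnegative and satisfy: h(1,1) ≤ C₀; h(s+1,1) = h(s,T) for all s ≥ 1; and for all s ≥ 1 and 1 ≤ t ≤ T−1, h(s,t+1) ≤ (1 − 3α/(8β))·h(s,t) + (α/(8β))·h(s,1) + (αC₀/(32β))·(1/2)^{s−1} + (α²/(4β))·δ. Then for all s ≥ 1: h(s,1) ≤ C₀·(1/2)^{s−1} + (8/7)·αδ. -/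
/-- Theorem 3.3 (stochastic setting) as a statement on real double sequences. -/
theorem stmt_11 (α β δ C₀ : ℝ) (hα : 0 < α) (hβ : 0 < β) (hαβ : α ≤ 2 * β)
    (hδ : 0 ≤ δ) (hC₀ : 0 < C₀)
    (T : ℕ) (hT : (8 * β / (3 * α)) * Real.log 8 ≤ (T : ℝ) - 1)
    (h : ℕ → ℕ → ℝ)
    (hpos : ∀ s t : ℕ, 1 ≤ s → 1 ≤ t → t ≤ T → 0 ≤ h s t)
    (hinit : h 1 1 ≤ C₀)
    (hlink : ∀ s : ℕ, 1 ≤ s → h (s + 1) 1 = h s T)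
    (hrec : ∀ s t : ℕ, 1 ≤ s → 1 ≤ t → t ≤ T - 1 →
      h s (t + 1) ≤ (1 - 3 * α / (8 * β)) * h s t + (α / (8 * β)) * h s 1
        + (α * C₀ / (32 * β)) * (1 / 2) ^ (s - 1) + (α ^ 2 / (4 * β)) * δ) :
    ∀ s : ℕ, 1 ≤ s → h s 1 ≤ C₀ * (1 / 2) ^ (s - 1) + (8 / 7) * (α * δ) := by
  have hb8 : (0:ℝ) < 8 * β := by linarith
  have hαδ : 0 ≤ α * δ := mul_nonneg hα.le hδ
  set ρ : ℝ := 1 - 3 * α / (8 * β) with hρdef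
  have hc : 0 < 3 * α / (8 * β) := by positivity
  have hρ0 : 0 ≤ ρ := by
    have h34 : 3 * α / (8 * β) ≤ 3 / 4 := by
      rw [div_le_iff₀ hb8]; linarith
    rw [hρdef]; linarith
  have hln8 : 0 < Real.log 8 := Real.log_pos (by norm_num)
  have hT1 : 1 ≤ T := by
    by_contra hcon
    have : T = 0 := by omega
    subst this
    have hpos8 : 0 < (8 * β / (3 * α)) * Real.log 8 := by positivity
    simp only [Nat.cast_zero] at hT
    linarith
  -- key: ρ ^ (T - 1) ≤ 1/8
  have hkey : ρ ^ (T - 1) ≤ 1 / 8 := by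
    have h1 : ρ ≤ Real.exp (-(3 * α / (8 * β))) := by
      have := Real.add_one_le_exp (-(3 * α / (8 * β)))
      rw [hρdef]; linarith
    have h2 : ρ ^ (T - 1) ≤ Real.exp (-(3 * α / (8 * β))) ^ (T - 1) :=
      pow_le_pow_left₀ hρ0 h1 _
    have h3 : Real.exp (-(3 * α / (8 * β))) ^ (T - 1)
        = Real.exp (((T - 1 : ℕ) : ℝ) * -(3 * α / (8 * β))) :=
      (Real.exp_nat_mul _ _).symm
    have hcast : ((T - 1 : ℕ) : ℝ) = (T : ℝ) - 1 := by
      rw [Nat.cast_sub hT1]; norm_num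
    have h4 : Real.log 8 ≤ ((T : ℝ) - 1) * (3 * α / (8 * β)) := by
      have hmul := mul_le_mul_of_nonneg_right hT hc.le
      have hid : (8 * β / (3 * α)) * Real.log 8 * (3 * α / (8 * β)) = Real.log 8 := by
        field_simp
      linarith [hid ▸ hmul]
    have h5 : Real.exp (((T - 1 : ℕ) : ℝ) * -(3 * α / (8 * β))) ≤ Real.exp (-Real.log 8) := by
      apply Real.exp_le_exp.mpr
      rw [hcast]
      nlinarith [h4]
    have h6 : Real.exp (-Real.log 8) = 1 / 8 := by
      rw [Real.exp_neg, Real.exp_log (by norm_num : (0:ℝ) < 8)]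
      norm_num
    calc ρ ^ (T - 1) ≤ _ := h2
      _ = _ := h3
      _ ≤ _ := h5
      _ = 1 / 8 := by rw [h6]
  intro s hs
  induction s, hs using Nat.le_induction with
  | base =>
      simp only [Nat.sub_self, pow_zero, mul_one]
      linarith
  | succ s hs ih =>
      obtain ⟨q, hqdef⟩ : ∃ q : ℝ, q = (1 / 2 : ℝ) ^ (s - 1) := ⟨_, rfl⟩
      have hq0 : 0 < q := by rw [hqdef]; positivity
      rw [← hqdef] at ih
      obtain ⟨L, hLdef⟩ : ∃ L : ℝ, L = h s 1 / 3 + C₀ * q / 12 + 2 / 3 * (α * δ) := ⟨_, rfl⟩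
      -- inner induction
      have inner : ∀ t : ℕ, t + 1 ≤ T →
          h s (t + 1) ≤ ρ ^ t * h s 1 + (1 - ρ ^ t) * L := by
        intro t
        induction t with
        | zero => intro _; simp
        | succ t iht =>
            intro hT2
            have ih' := iht (by omega)
            have hr := hrec s (t + 1) hs (by omega) (by omega)
            have hid : (α / (8 * β)) * h s 1 + (α * C₀ / (32 * β)) * (1 / 2 : ℝ) ^ (s - 1)
                + (α ^ 2 / (4 * β)) * δ = (1 - ρ) * L := by
              rw [hρdef, hLdef, hqdef]
              field_simp
              ring
            have hmul := mul_le_mul_of_nonneg_left ih' hρ0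
            calc h s (t + 1 + 1)
                ≤ ρ * h s (t + 1) + (α / (8 * β)) * h s 1
                  + (α * C₀ / (32 * β)) * (1 / 2 : ℝ) ^ (s - 1) + (α ^ 2 / (4 * β)) * δ := hr
              _ = ρ * h s (t + 1) + (1 - ρ) * L := by linarith [hid]
              _ ≤ ρ * (ρ ^ t * h s 1 + (1 - ρ ^ t) * L) + (1 - ρ) * L := by linarith [hmul]
              _ = ρ ^ (t + 1) * h s 1 + (1 - ρ ^ (t + 1)) * L := by ring
      have hTeq : T - 1 + 1 = T := by omega
      have hinnerT := inner (T - 1) (by omega)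
      rw [hTeq] at hinnerT
      obtain ⟨r, hrdef⟩ : ∃ r : ℝ, r = ρ ^ (T - 1) := ⟨_, rfl⟩
      rw [← hrdef] at hinnerT
      rw [← hrdef] at hkey
      have hr0 : 0 ≤ r := by rw [hrdef]; exact pow_nonneg hρ0 _
      have hlinkeq := hlink s hs
      have hh1 : 0 ≤ h s 1 := hpos s 1 hs le_rfl hT1
      have hqs : (1 / 2 : ℝ) ^ (s + 1 - 1) = q * (1 / 2) := by
        rw [hqdef, ← pow_succ]
        congr 1
        omega
      rw [hlinkeq, hqs]
      have hC0q : 0 ≤ C₀ * q := by positivity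
      rcases le_or_gt L (h s 1) with hcase | hcase
      · have hint : (1 / 8 - r) * (h s 1 - L) ≥ 0 :=
          mul_nonneg (by linarith) (by linarith)
        have e2 : r * h s 1 + (1 - r) * L
            = L + (1 / 8) * (h s 1 - L) - (1 / 8 - r) * (h s 1 - L) := by ring
        have step1 : h s T ≤ L + (1 / 8) * (h s 1 - L) := by linarith [hinnerT, hint, e2]
        rw [hLdef] at step1
        linarith [step1, ih, hC0q, hαδ]
      · have hint : 0 ≤ r * (L - h s 1) := mul_nonneg hr0 (by linarith)
        have e3 : r * h s 1 + (1 - r) * L = L - r * (L - h s 1) := by ring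
        have step1 : h s T ≤ L := by linarith [hinnerT, hint, e3]
        rw [hLdef] at step1
        linarith [step1, ih, hC0q, hαδ]
end

section
/- Let α, β > 0 with α ≤ 2β, let δ ≥ 0, C₀ ∈ ℝ, and let T be a natural number with T − 1 ≥ (8β/(3α))·ln 8. Let h : ℕ≥1 × {1,…,T} → ℝ be nonnegative and satisfy: h(1,1) ≤ C₀; h(s+1,1) = h(s,T) for all s ≥ 1; and for all s ≥ 1 and 1 ≤ t ≤ T−1, h(s,t+1) ≤ (1 − 3α/(8β))·h(s,t) + (α/(8β))·h(s,1) + (α²/(4β))·δ. Then for all s ≥ 1: h(s,1) ≤ C₀·(5/12)^{s−1} + (8/7)·αδ. -/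
/-- Theorem 3.6 (finite-sum setting) as a statement on real double sequences. -/
theorem stmt_12 (α β δ C₀ : ℝ) (hα : 0 < α) (hβ : 0 < β) (hαβ : α ≤ 2 * β)
    (hδ : 0 ≤ δ)
    (T : ℕ) (hT : (8 * β / (3 * α)) * Real.log 8 ≤ (T : ℝ) - 1)
    (h : ℕ → ℕ → ℝ)
    (hpos : ∀ s t : ℕ, 1 ≤ s → 1 ≤ t → t ≤ T → 0 ≤ h s t)
    (hinit : h 1 1 ≤ C₀)
    (hlink : ∀ s : ℕ, 1 ≤ s → h (s + 1) 1 = h s T)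
    (hrec : ∀ s t : ℕ, 1 ≤ s → 1 ≤ t → t ≤ T - 1 →
      h s (t + 1) ≤ (1 - 3 * α / (8 * β)) * h s t + (α / (8 * β)) * h s 1
        + (α ^ 2 / (4 * β)) * δ) :
    ∀ s : ℕ, 1 ≤ s → h s 1 ≤ C₀ * (5 / 12) ^ (s - 1) + (8 / 7) * (α * δ) := by
  have hβ8 : (0:ℝ) < 8 * β := by linarith
  set c : ℝ := 3 * α / (8 * β) with hc
  have hc0 : 0 < c := by positivity
  have hc1 : c ≤ 3 / 4 := by
    rw [hc, div_le_iff₀ hβ8]; linarith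
  set r : ℝ := 1 - c with hrdef
  have hr0 : 0 ≤ r := by rw [hrdef]; linarith
  have hr1 : r < 1 := by rw [hrdef]; linarith
  -- log 8 > 1
  have hlog8 : (1:ℝ) ≤ Real.log 8 := by
    rw [Real.le_log_iff_exp_le (by norm_num)]
    have := Real.exp_one_lt_d9
    linarith
  -- T ≥ 2
  have hT2 : 2 ≤ T := by
    have h43 : (4:ℝ)/3 ≤ 8 * β / (3 * α) := by
      rw [le_div_iff₀ (by positivity)]; linarith
    have : (4:ℝ)/3 ≤ (T:ℝ) - 1 := by
      calc (4:ℝ)/3 = (4/3) * 1 := by ring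
        _ ≤ (8 * β / (3 * α)) * Real.log 8 := by
            apply mul_le_mul h43 hlog8 (by norm_num) (by positivity)
        _ ≤ (T:ℝ) - 1 := hT
    by_contra hcon
    push_neg at hcon
    interval_cases T <;> norm_num at this <;> linarith
  have hcastT : ((T - 1 : ℕ) : ℝ) = (T : ℝ) - 1 := by
    rw [Nat.cast_sub (by omega)]; norm_num
  -- q = r ^ (T-1) ≤ 1/8
  have hq : r ^ (T - 1) ≤ 1 / 8 := by
    have h1 : r ≤ Real.exp (-c) := by
      have := Real.add_one_le_exp (-c)
      rw [hrdef]; linarith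
    have h2 : r ^ (T - 1) ≤ Real.exp (-c) ^ (T - 1) :=
      pow_le_pow_left₀ hr0 h1 _
    have h3 : Real.exp (-c) ^ (T - 1) = Real.exp (-(c * ((T:ℝ) - 1))) := by
      rw [← Real.exp_nat_mul, hcastT]; ring_nf
    have h4 : Real.log 8 ≤ c * ((T:ℝ) - 1) := by
      have := mul_le_mul_of_nonneg_left hT hc0.le
      have hcinv : c * (8 * β / (3 * α)) = 1 := by
        rw [hc]; field_simp
      calc Real.log 8 = c * (8 * β / (3 * α)) * Real.log 8 := by rw [hcinv]; ring
        _ = c * (8 * β / (3 * α) * Real.log 8) := by ring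
        _ ≤ c * ((T:ℝ) - 1) := this
    have h5 : Real.exp (-(c * ((T:ℝ) - 1))) ≤ Real.exp (-Real.log 8) := by
      apply Real.exp_le_exp.mpr; linarith
    have h6 : Real.exp (-Real.log 8) = 1 / 8 := by
      rw [Real.exp_neg, Real.exp_log (by norm_num)]; norm_num
    calc r ^ (T - 1) ≤ Real.exp (-c) ^ (T - 1) := h2
      _ = Real.exp (-(c * ((T:ℝ) - 1))) := h3
      _ ≤ Real.exp (-Real.log 8) := h5
      _ = 1 / 8 := h6
  have hq0 : 0 ≤ r ^ (T - 1) := pow_nonneg hr0 _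
  -- per-epoch contraction
  have key : ∀ s : ℕ, 1 ≤ s → h (s + 1) 1 ≤ (5 / 12) * h s 1 + (2 / 3) * (α * δ) := by
    intro s hs
    have h1nn : 0 ≤ h s 1 := hpos s 1 hs le_rfl (by omega)
    -- inner induction
    have inner : ∀ t : ℕ, t ≤ T - 1 →
        h s (t + 1) ≤ r ^ t * h s 1
          + ((1 - r ^ t) / c) * ((α / (8 * β)) * h s 1 + (α ^ 2 / (4 * β)) * δ) := by
      intro t
      induction t with
      | zero => intro _; simp
      | succ t ih =>
        intro ht
        have ht' : t ≤ T - 1 := by omega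
        have ih' := ih ht'
        have hstep := hrec s (t + 1) hs (by omega) ht
        have hmul := mul_le_mul_of_nonneg_left ih' hr0
        have hid : r * ((1 - r ^ t) / c) + 1 = (1 - r ^ (t + 1)) / c := by
          rw [hrdef]
          field_simp
          ring
        calc h s (t + 1 + 1)
            ≤ r * h s (t + 1) + α / (8 * β) * h s 1 + α ^ 2 / (4 * β) * δ := hstep
          _ ≤ r * (r ^ t * h s 1 + (1 - r ^ t) / c * (α / (8 * β) * h s 1 + α ^ 2 / (4 * β) * δ))
              + α / (8 * β) * h s 1 + α ^ 2 / (4 * β) * δ := by linarith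
          _ = r ^ (t + 1) * h s 1 + (r * ((1 - r ^ t) / c) + 1)
              * (α / (8 * β) * h s 1 + α ^ 2 / (4 * β) * δ) := by ring
          _ = r ^ (t + 1) * h s 1
              + (1 - r ^ (t + 1)) / c * (α / (8 * β) * h s 1 + α ^ 2 / (4 * β) * δ) := by
              rw [hid]
    have hfin := inner (T - 1) le_rfl
    rw [show T - 1 + 1 = T by omega] at hfin
    rw [hlink s hs]
    set q : ℝ := r ^ (T - 1) with hqdef
    have hsimp : ((1 - q) / c) * ((α / (8 * β)) * h s 1 + (α ^ 2 / (4 * β)) * δ)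
        = (1 - q) * ((1 / 3) * h s 1 + (2 * α / 3) * δ) := by
      rw [hc]
      field_simp
      ring
    rw [hsimp] at hfin
    nlinarith [mul_le_mul_of_nonneg_right hq h1nn, mul_nonneg hq0 (mul_nonneg hα.le hδ),
      mul_nonneg hq0 h1nn]
  -- outer induction
  intro s hs
  induction s, hs using Nat.le_induction with
  | base =>
    simp only [Nat.sub_self, pow_zero, mul_one]
    nlinarith [mul_nonneg hα.le hδ]
  | succ s hs ih =>
    have hpow : (5 / 12 : ℝ) ^ s = (5 / 12) * (5 / 12) ^ (s - 1) := by
      rw [← pow_succ']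
      congr 1
      omega
    have := key s hs
    rw [show s + 1 - 1 = s by omega, hpow]
    nlinarith [mul_nonneg hα.le hδ]
end

section
/- Let α, β > 0 with α ≤ 2β, C₀ > 0, ε > 0, and set δ = 7ε/(16α). Let T be a natural number with T − 1 ≥ (8β/(3α))·ln 8, and let h : ℕ≥1 × {1,…,T} → ℝ be nonnegative and satisfy: h(1,1) ≤ C₀; h(s+1,1) = h(s,T) for all s ≥ 1; and for all s ≥ 1 and 1 ≤ t ≤ T−1, h(s,t+1) ≤ (1 − 3α/(8β))·h(s,t) + (α/(8β))·h(s,1) + (αC₀/(32β))·(1/2)^{s−1} + (α²/(4β))·δ. Then for every natural number S with S ≥ log₂(C₀/ε) + 2, one has h(S,1) ≤ ε. -/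
/-!
Write `r = 3α/(8β)` and `M_s = h(s,1)/3 + C₀(1/2)^{s-1}/12 + 2αδ/3`. The recursion says exactly
`h(s,t+1) - M_s ≤ (1 - r)(h(s,t) - M_s)`, so over one epoch the distance to `M_s` contracts by
`(1 - r)^{T-1} ≤ exp(-r(T-1)) ≤ 1/8`. With this contraction factor the bound
`h(s,1) ≤ C₀(1/2)^{s-1} + (8/7)αδ` passes from one epoch to the next, and the choice of `δ`
makes `(8/7)αδ = ε/2`, while `C₀(1/2)^{S-1} ≤ ε/2` once `S ≥ log₂(C₀/ε) + 2`.
-/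

open Real

lemma one_sub_pow_le_inv_of_log_le {r a : ℝ} {n : ℕ} (ha : 0 < a) (hr : r ≤ 1)
    (h : log a ≤ r * n) : (1 - r) ^ n ≤ a⁻¹ :=
  calc (1 - r) ^ n ≤ exp (-r) ^ n :=
        pow_le_pow_left₀ (by linarith) (by linarith [add_one_le_exp (-r)]) n
    _ = exp (-(r * n)) := by rw [← exp_nat_mul]; ring_nf
    _ ≤ exp (-log a) := exp_le_exp.2 (by linarith)
    _ = a⁻¹ := by rw [exp_neg, exp_log ha]

lemma mul_half_pow_le_of_logb_le {C ε : ℝ} (hC : 0 < C) (hε : 0 < ε) {n : ℕ}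
    (h : logb 2 (C / ε) ≤ n) : C * (1 / 2) ^ n ≤ ε := by
  have hle : C / ε ≤ 2 ^ n := by
    simpa using (logb_le_iff_le_rpow one_lt_two (by positivity)).1 h
  rw [div_le_iff₀ hε] at hle
  rw [one_div_pow, mul_one_div, div_le_iff₀ (by positivity)]
  linarith

lemma sub_le_one_sub_pow_mul_sub {u : ℕ → ℝ} {r M : ℝ} (hr : r ≤ 1) {n : ℕ}
    (hu : ∀ k < n, u (k + 1) ≤ (1 - r) * u k + r * M) :
    u n - M ≤ (1 - r) ^ n * (u 0 - M) :=
  le_geom (u := fun k ↦ u k - M) (by linarith) n fun k hk ↦ by linarith [hu k hk]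

/-- The hypothesis gives `b ≤ (1 + 2q)/3 · a + (1 - q)(C/12 + 2D/3)`, which for `q ≤ 1/8` sends
`C + (8/7) D` to at most `(47/96) C + (89/84) D`. -/
lemma le_half_add_of_sub_le_mul_sub {a b q C D : ℝ} (hq₀ : 0 ≤ q) (hq : q ≤ 1 / 8)
    (hC : 0 ≤ C) (hD : 0 ≤ D) (ha : a ≤ C + 8 / 7 * D)
    (hb : b - (a / 3 + C / 12 + 2 / 3 * D) ≤ q * (a - (a / 3 + C / 12 + 2 / 3 * D))) :
    b ≤ C / 2 + 8 / 7 * D := by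
  nlinarith [mul_le_mul_of_nonneg_left ha hq₀, mul_nonneg (sub_nonneg.2 hq) hC,
    mul_nonneg (sub_nonneg.2 hq) hD]

lemma le_mul_half_pow_add_of_sub_le_mul_sub {x : ℕ → ℝ} {q C D : ℝ} (hq₀ : 0 ≤ q)
    (hq : q ≤ 1 / 8) (hC : 0 ≤ C) (hD : 0 ≤ D) (hx₁ : x 1 ≤ C)
    (hx : ∀ s, 1 ≤ s → x (s + 1) - (x s / 3 + C * (1 / 2) ^ (s - 1) / 12 + 2 / 3 * D) ≤
      q * (x s - (x s / 3 + C * (1 / 2) ^ (s - 1) / 12 + 2 / 3 * D))) :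
    ∀ s, 1 ≤ s → x s ≤ C * (1 / 2) ^ (s - 1) + 8 / 7 * D := by
  refine Nat.le_induction (by rw [Nat.sub_self, pow_zero, mul_one]; linarith) fun s hs ih ↦ ?_
  have hhalf : (1 / 2 : ℝ) ^ (s + 1 - 1) = (1 / 2) ^ (s - 1) / 2 := by
    rw [Nat.add_sub_cancel, ← pow_sub_one_mul (by omega : s ≠ 0)]; ring
  rw [hhalf, ← mul_div_assoc]
  exact le_half_add_of_sub_le_mul_sub hq₀ hq (by positivity) hD ih (hx s hs)

theorem stmt_13_general (α β C₀ ε : ℝ) (hα : 0 < α) (hβ : 0 < β) (hαβ : α ≤ 2 * β)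
    (hC₀ : 0 < C₀) (hε : 0 < ε)
    (δ : ℝ) (hδ : δ = 7 * ε / (16 * α))
    (T : ℕ) (hT : (8 * β / (3 * α)) * Real.log 8 ≤ (T : ℝ) - 1)
    (h : ℕ → ℕ → ℝ)
    (hinit : h 1 1 ≤ C₀)
    (hlink : ∀ s : ℕ, 1 ≤ s → h (s + 1) 1 = h s T)
    (hrec : ∀ s t : ℕ, 1 ≤ s → 1 ≤ t → t ≤ T - 1 →
      h s (t + 1) ≤ (1 - 3 * α / (8 * β)) * h s t + (α / (8 * β)) * h s 1
        + (α * C₀ / (32 * β)) * (1 / 2) ^ (s - 1) + (α ^ 2 / (4 * β)) * δ) :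
    ∀ S : ℕ, 1 ≤ S → Real.logb 2 (C₀ / ε) + 2 ≤ (S : ℝ) → h S 1 ≤ ε := by
  set r := 3 * α / (8 * β) with hr
  have hr₁ : r ≤ 1 := by rw [hr, div_le_one (by positivity)]; linarith
  have hαδ : α * δ = 7 / 16 * ε := by rw [hδ]; field_simp
  have hT₂ : 2 ≤ T := by
    have : (1 : ℝ) < T := by
      linarith [show 0 < 8 * β / (3 * α) * log 8 by positivity]
    exact_mod_cast this
  have hq : (1 - r) ^ (T - 1) ≤ 1 / 8 := by
    rw [one_div]
    refine one_sub_pow_le_inv_of_log_le (by norm_num) hr₁ ?_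
    rw [Nat.cast_sub (by omega), Nat.cast_one]
    calc log 8 = r * (8 * β / (3 * α) * log 8) := by rw [hr]; field_simp
      _ ≤ r * (T - 1) := by gcongr
  set M := fun s : ℕ ↦ h s 1 / 3 + C₀ * (1 / 2) ^ (s - 1) / 12 + 2 / 3 * (α * δ) with hM
  have hdrift : ∀ s, α / (8 * β) * h s 1 + α * C₀ / (32 * β) * (1 / 2) ^ (s - 1)
      + α ^ 2 / (4 * β) * δ = r * M s := fun s ↦ by rw [hM, hr]; ring
  have hepoch : ∀ s, 1 ≤ s → h (s + 1) 1 - M s ≤ (1 - r) ^ (T - 1) * (h s 1 - M s) := by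
    intro s hs
    have := sub_le_one_sub_pow_mul_sub (u := fun k ↦ h s (k + 1)) (M := M s) hr₁ (n := T - 1)
      fun k hk ↦ by linarith [hrec s (k + 1) hs (by omega) (by omega), hdrift s]
    rwa [Nat.sub_add_cancel (by omega), ← hlink s hs] at this
  have hbound := le_mul_half_pow_add_of_sub_le_mul_sub (x := fun s ↦ h s 1) (D := α * δ)
    (pow_nonneg (by linarith) _) hq hC₀.le (by rw [hαδ]; positivity) hinit hepoch
  intro S hS hlog
  have hgeom : C₀ * (1 / 2) ^ (S - 1) ≤ ε / 2 := by
    refine mul_half_pow_le_of_logb_le hC₀ (by positivity) ?_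
    rw [div_div_eq_mul_div, mul_comm, mul_div_assoc, logb_mul (by norm_num) (by positivity),
      logb_self_eq_one one_lt_two, Nat.cast_sub hS, Nat.cast_one]
    linarith
  linarith [hbound S hS]

/-- Epoch count for ε-accuracy in the proof of Theorem 2.1. -/
theorem stmt_13 (α β C₀ ε : ℝ) (hα : 0 < α) (hβ : 0 < β) (hαβ : α ≤ 2 * β)
    (hC₀ : 0 < C₀) (hε : 0 < ε)
    (δ : ℝ) (hδ : δ = 7 * ε / (16 * α))
    (T : ℕ) (hT : (8 * β / (3 * α)) * Real.log 8 ≤ (T : ℝ) - 1)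
    (h : ℕ → ℕ → ℝ)
    (hpos : ∀ s t : ℕ, 1 ≤ s → 1 ≤ t → t ≤ T → 0 ≤ h s t)
    (hinit : h 1 1 ≤ C₀)
    (hlink : ∀ s : ℕ, 1 ≤ s → h (s + 1) 1 = h s T)
    (hrec : ∀ s t : ℕ, 1 ≤ s → 1 ≤ t → t ≤ T - 1 →
      h s (t + 1) ≤ (1 - 3 * α / (8 * β)) * h s t + (α / (8 * β)) * h s 1
        + (α * C₀ / (32 * β)) * (1 / 2) ^ (s - 1) + (α ^ 2 / (4 * β)) * δ) :
    ∀ S : ℕ, 1 ≤ S → Real.logb 2 (C₀ / ε) + 2 ≤ (S : ℝ) → h S 1 ≤ ε :=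
  stmt_13_general α β C₀ ε hα hβ hαβ hC₀ hε δ hδ T hT h hinit hlink hrec
end

section
/- Let α, β > 0 with α ≤ 2β, let δ₁ ≥ 0, γ ≥ 0, μ ≥ 0, C₀ > 0, and let T be a natural number with T − 1 ≥ (8β/(3α))·ln 8. Let h : ℕ≥1 × {1,…,T} → ℝ be nonnegative and satisfy: h(1,1) ≤ C₀; h(s+1,1) = h(s,T) for all s ≥ 1; and for all s ≥ 1 and 1 ≤ t ≤ T−1, h(s,t+1) ≤ (1 − 3α/(8β))·h(s,t) + (α/(8β))·h(s,1) + (αC₀/(32β))·(1/2)^{s−1} + (α²/(4β))·δ₁ + (α/(2β))·γμ. Then for all s ≥ 1: h(s,1) ≤ C₀·(1/2)^{s−1} + (8/7)·(αδ₁ + 2γμ). -/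
set_option maxHeartbeats 1000000


/-- Sequence form of equation (eq:s_rate_smoothed) in Theorem 5.3. -/
theorem stmt_18 (α β δ₁ γ μ C₀ : ℝ) (hα : 0 < α) (hβ : 0 < β) (hαβ : α ≤ 2 * β)
    (hδ₁ : 0 ≤ δ₁) (hγ : 0 ≤ γ) (hμ : 0 ≤ μ) (hC₀ : 0 < C₀)
    (T : ℕ) (hT : (8 * β / (3 * α)) * Real.log 8 ≤ (T : ℝ) - 1)
    (h : ℕ → ℕ → ℝ)
    (hpos : ∀ s t : ℕ, 1 ≤ s → 1 ≤ t → t ≤ T → 0 ≤ h s t)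
    (hinit : h 1 1 ≤ C₀)
    (hlink : ∀ s : ℕ, 1 ≤ s → h (s + 1) 1 = h s T)
    (hrec : ∀ s t : ℕ, 1 ≤ s → 1 ≤ t → t ≤ T - 1 →
      h s (t + 1) ≤ (1 - 3 * α / (8 * β)) * h s t + (α / (8 * β)) * h s 1
        + (α * C₀ / (32 * β)) * (1 / 2) ^ (s - 1) + (α ^ 2 / (4 * β)) * δ₁
        + (α / (2 * β)) * (γ * μ)) :
    ∀ s : ℕ, 1 ≤ s →
      h s 1 ≤ C₀ * (1 / 2) ^ (s - 1) + (8 / 7) * (α * δ₁ + 2 * γ * μ) := by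
  have hβ8 : (0:ℝ) < 8 * β := by linarith
  obtain ⟨q, hqdef⟩ : ∃ q : ℝ, q = 1 - 3 * α / (8 * β) := ⟨_, rfl⟩
  have hfrac_pos : 0 < 3 * α / (8 * β) := by positivity
  have hfrac_le : 3 * α / (8 * β) ≤ 1 := by
    rw [div_le_one hβ8]; linarith
  have hq0 : 0 ≤ q := by rw [hqdef]; linarith
  have hq1 : q < 1 := by rw [hqdef]; linarith
  -- T ≥ 2
  have hln8 : 0 < Real.log 8 := Real.log_pos (by norm_num)
  have hTpos : (1:ℝ) < (T:ℝ) := by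
    have : 0 < (8 * β / (3 * α)) * Real.log 8 := by positivity
    linarith
  have hT2 : 2 ≤ T := by exact_mod_cast Nat.one_lt_cast.mp hTpos
  have hTcast : ((T - 1 : ℕ) : ℝ) = (T : ℝ) - 1 := by
    have h1T : (1:ℕ) ≤ T := by omega
    push_cast [Nat.cast_sub h1T]; ring
  -- x := q ^ (T-1) ≤ 1/8
  obtain ⟨x, hxdef⟩ : ∃ x : ℝ, x = q ^ (T - 1) := ⟨_, rfl⟩
  have hx0 : 0 ≤ x := hxdef ▸ pow_nonneg hq0 _
  have hx18 : x ≤ 1 / 8 := by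
    have hqe : q ≤ Real.exp (q - 1) := by
      have := Real.add_one_le_exp (q - 1)
      linarith
    have h1 : x ≤ Real.exp (q - 1) ^ (T - 1) := by
      rw [hxdef]; exact pow_le_pow_left₀ hq0 hqe _
    have h2 : Real.exp (q - 1) ^ (T - 1) = Real.exp (((T - 1 : ℕ) : ℝ) * (q - 1)) := by
      rw [← Real.exp_nat_mul]
    have h3 : ((T - 1 : ℕ) : ℝ) * (q - 1) ≤ Real.log (1 / 8) := by
      rw [hTcast]
      have key : Real.log 8 ≤ ((T:ℝ) - 1) * (3 * α / (8 * β)) := by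
        have hmul := mul_le_mul_of_nonneg_right hT hfrac_pos.le
        have hid : 8 * β / (3 * α) * Real.log 8 * (3 * α / (8 * β)) = Real.log 8 := by
          field_simp
        linarith [hid ▸ hmul]
      have hlog : Real.log (1 / 8 : ℝ) = - Real.log 8 := by
        rw [one_div, Real.log_inv]
      have hqq : ((T:ℝ) - 1) * (q - 1) = -(((T:ℝ) - 1) * (3 * α / (8 * β))) := by
        rw [hqdef]; ring
      rw [hlog, hqq]
      linarith
    have h4 : Real.exp (((T - 1 : ℕ) : ℝ) * (q - 1)) ≤ 1 / 8 := by
      calc Real.exp (((T - 1 : ℕ) : ℝ) * (q - 1)) ≤ Real.exp (Real.log (1/8)) :=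
            Real.exp_le_exp.mpr h3
        _ = 1 / 8 := Real.exp_log (by norm_num)
    linarith [h2 ▸ h1]
  -- inner iteration
  have inner : ∀ s : ℕ, 1 ≤ s →
      h s T ≤ x * h s 1 + (1 - x) *
        ((1/3) * h s 1 + (C₀ / 12) * (1/2 : ℝ) ^ (s - 1) + (2*α/3) * δ₁ + (4/3) * (γ*μ)) := by
    intro s hs
    obtain ⟨C, hCdef⟩ : ∃ C : ℝ, C = (1/3) * h s 1 + (C₀ / 12) * (1/2 : ℝ) ^ (s - 1)
        + (2*α/3) * δ₁ + (4/3) * (γ*μ) := ⟨_, rfl⟩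
    have hBC : (α / (8 * β)) * h s 1 + (α * C₀ / (32 * β)) * (1/2 : ℝ) ^ (s - 1)
        + (α ^ 2 / (4 * β)) * δ₁ + (α / (2 * β)) * (γ * μ) = (3 * α / (8 * β)) * C := by
      rw [hCdef]
      field_simp
      ring
    have aux : ∀ k : ℕ, k ≤ T - 1 → h s (1 + k) ≤ q ^ k * h s 1 + (1 - q ^ k) * C := by
      intro k
      induction k with
      | zero => intro _; simp
      | succ k ih =>
        intro hk
        have ihk := ih (by omega)
        have hr := hrec s (1 + k) hs (by omega) (by omega)
        have hr' : h s (1 + (k + 1)) ≤ q * h s (1 + k) + (3 * α / (8 * β)) * C := by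
          have heq : (1 + k) + 1 = 1 + (k + 1) := by omega
          rw [heq] at hr
          calc h s (1 + (k + 1)) ≤ (1 - 3 * α / (8 * β)) * h s (1 + k)
              + ((α / (8 * β)) * h s 1 + (α * C₀ / (32 * β)) * (1/2 : ℝ) ^ (s - 1)
                + (α ^ 2 / (4 * β)) * δ₁ + (α / (2 * β)) * (γ * μ)) := by linarith
            _ = q * h s (1 + k) + (3 * α / (8 * β)) * C := by rw [hBC, hqdef]
        have hmono : q * h s (1 + k) ≤ q * (q ^ k * h s 1 + (1 - q ^ k) * C) :=
          mul_le_mul_of_nonneg_left ihk hq0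
        calc h s (1 + (k + 1)) ≤ q * (q ^ k * h s 1 + (1 - q ^ k) * C)
              + (3 * α / (8 * β)) * C := by linarith
          _ = q ^ (k + 1) * h s 1 + (1 - q ^ (k + 1)) * C
              + ((3 * α / (8 * β)) - (1 - q)) * C := by ring
          _ = q ^ (k + 1) * h s 1 + (1 - q ^ (k + 1)) * C := by
              rw [hqdef]; ring
    have haux := aux (T - 1) le_rfl
    have hT1 : 1 + (T - 1) = T := by omega
    rw [hT1] at haux
    rw [hxdef, ← hCdef]
    exact haux
  -- outer induction
  intro s hs
  induction s, hs using Nat.le_induction with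
  | base =>
    simp only [Nat.sub_self, pow_zero, mul_one]
    nlinarith [mul_nonneg hα.le hδ₁, mul_nonneg hγ hμ]
  | succ s hs ih =>
    have hlink' := hlink s hs
    have hinner := inner s hs
    obtain ⟨p, hpdef⟩ : ∃ p : ℝ, p = (1/2 : ℝ) ^ (s - 1) := ⟨_, rfl⟩
    have hp : 0 < p := by rw [hpdef]; positivity
    have hps : (1/2 : ℝ) ^ (s + 1 - 1) = (1/2) * p := by
      have heq : s + 1 - 1 = (s - 1) + 1 := by omega
      rw [heq, pow_succ, hpdef]; ring
    obtain ⟨K, hKdef⟩ : ∃ K : ℝ, K = (8/7) * (α * δ₁ + 2 * γ * μ) := ⟨_, rfl⟩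
    have hK0 : 0 ≤ K := by
      have h1 := mul_nonneg hα.le hδ₁
      have h2 := mul_nonneg hγ hμ
      rw [hKdef]; nlinarith
    rw [← hpdef] at ih hinner
    have hcoef : 0 ≤ x + (1 - x) / 3 := by linarith
    have ih' : h s 1 ≤ C₀ * p + K := by rw [hKdef]; linarith [ih]
    have hcomb : (x + (1 - x) / 3) * h s 1 ≤ (x + (1 - x) / 3) * (C₀ * p + K) :=
      mul_le_mul_of_nonneg_left ih' hcoef
    have hE : (2*α/3) * δ₁ + (4/3) * (γ*μ) = (7/12) * K := by
      rw [hKdef]; ring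
    have hrw : (1/3) * h s 1 + (C₀ / 12) * p + (2*α/3) * δ₁ + (4/3) * (γ*μ)
        = (1/3) * h s 1 + (C₀ / 12) * p + (7/12) * K := by rw [hKdef]; ring
    rw [hrw] at hinner
    rw [hlink', hps, show (8:ℝ)/7 * (α * δ₁ + 2 * γ * μ) = K from hKdef.symm]
    linarith [hcomb, hinner, (mul_pos hC₀ hp).le,
      mul_nonneg (by linarith : (0:ℝ) ≤ 1/8 - x) (mul_pos hC₀ hp).le,
      mul_nonneg (by linarith : (0:ℝ) ≤ 1 - x) hK0]
end
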